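/- For every n with 4 | n and n ≤ 68, all coefficients of the extremal Type III weight enumerator W* of length n are nonnegative. -/
import Mathlib

open MvPolynomial

/-- Gleason generator `f = X^4 + 8XY^3` for Type III weight enumerators. -/
noncomputable def fIII : MvPolynomial (Fin 2) ℝ := X 0 ^ 4 + 8 * X 0 * X 1 ^ 3

/-- Gleason generator `g = Y^3 (X^3 - Y^3)^3` for Type III weight enumerators. -/
noncomputable def gIII : MvPolynomial (Fin 2) ℝ := X 1 ^ 3 * (X 0 ^ 3 - X 1 ^ 3) ^ 3

/-- The coefficient of the monomial `X^a Y^b` in a two-variable polynomial. -/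
noncomputable def coeffXY (P : MvPolynomial (Fin 2) ℝ) (a b : ℕ) : ℝ :=
  P.coeff (Finsupp.single 0 a + Finsupp.single 1 b)

/-- `P` is the extremal Type III weight enumerator of length `n`: a polynomial
`∑_{i=0}^{m} a_i f^(n/4-3i) g^i` (with `m = ⌊n/12⌋`) of the form
`X^n + ∑_{i=m+1}^{n/3} A*_{3i} X^(n-3i) Y^(3i)`. -/
def IsExtremalWE3 (n : ℕ) (P : MvPolynomial (Fin 2) ℝ) : Prop :=
  (∃ a : Fin (n / 12 + 1) → ℝ,
    P = ∑ i : Fin (n / 12 + 1), C (a i) * fIII ^ (n / 4 - 3 * (i : ℕ)) * gIII ^ (i : ℕ)) ∧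
  coeffXY P n 0 = 1 ∧
  ∀ i : ℕ, 1 ≤ i → i ≤ n / 12 → coeffXY P (n - 3 * i) (3 * i) = 0

lemma coeffXY_add' (p q : MvPolynomial (Fin 2) ℝ) (a b : ℕ) :
    coeffXY (p + q) a b = coeffXY p a b + coeffXY q a b := coeff_add _ _ _

lemma single_ext' (a b a' b' : ℕ) :
    (Finsupp.single (0:Fin 2) a + Finsupp.single 1 b = Finsupp.single (0:Fin 2) a' + Finsupp.single 1 b')
      ↔ (a' = a ∧ b' = b) := by
  constructor
  · intro h
    have h0 := DFunLike.congr_fun h 0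
    have h1 := DFunLike.congr_fun h 1
    simp [Finsupp.single_apply] at h0 h1
    exact ⟨h0.symm, h1.symm⟩
  · rintro ⟨rfl, rfl⟩; rfl

lemma coeffXY_CXY' (c : ℝ) (a b a' b' : ℕ) :
    coeffXY (C c * X 0 ^ a * X 1 ^ b) a' b' = if a' = a ∧ b' = b then c else 0 := by
  unfold coeffXY
  rw [mul_assoc, coeff_C_mul, X_pow_eq_monomial, X_pow_eq_monomial, monomial_mul, mul_one,
    coeff_monomial]
  simp only [single_ext']
  split <;> simp

lemma coeff_term_nonneg' {c : ℝ} (hc : 0 ≤ c) (a b : ℕ) (d : Fin 2 →₀ ℕ) :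
    0 ≤ MvPolynomial.coeff d (C c * X 0 ^ a * X 1 ^ b) := by
  rw [mul_assoc, coeff_C_mul, X_pow_eq_monomial, X_pow_eq_monomial, monomial_mul, mul_one,
    coeff_monomial]
  split <;> simp [hc]


set_option maxHeartbeats 1000000

lemma case0 (P : MvPolynomial (Fin 2) ℝ) (hP : IsExtremalWE3 0 P) :
    ∀ d : Fin 2 →₀ ℕ, 0 ≤ P.coeff d := by
  obtain ⟨⟨a, hPeq⟩, h1, h0⟩ := hP
  set b : ℕ → ℝ := fun j => if h : j < 0/12+1 then a ⟨j, h⟩ else 0 with hb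
  have key : ∀ i : Fin (0/12+1), a i = b (i : ℕ) := by
    intro i; obtain ⟨iv, hiv⟩ := i; simp only [hb]; rw [dif_pos hiv]
  simp only [key, Fin.sum_univ_succ, Fin.sum_univ_zero, Fin.val_zero, Fin.val_succ] at hPeq
  norm_num at hPeq
  have hExp : P = C (b 0 * 1) * X 0 ^ 0 * X 1 ^ 0 := by
    rw [hPeq]
    simp only [map_add, map_mul, map_one, map_neg, map_ofNat]
    ring
  have e0 : b 0 * 1 = 1 := by
    rw [hExp] at h1
    simp only [coeffXY_add', coeffXY_CXY'] at h1
    norm_num at h1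
    linarith
  have hv0 : b 0 = 1 := by linarith
  intro d
  rw [hExp]
  repeat' apply add_nonneg
  all_goals refine coeff_term_nonneg' ?_ _ _ _
  all_goals simp only [hv0]; norm_num

lemma case4 (P : MvPolynomial (Fin 2) ℝ) (hP : IsExtremalWE3 4 P) :
    ∀ d : Fin 2 →₀ ℕ, 0 ≤ P.coeff d := by
  obtain ⟨⟨a, hPeq⟩, h1, h0⟩ := hP
  set b : ℕ → ℝ := fun j => if h : j < 4/12+1 then a ⟨j, h⟩ else 0 with hb
  have key : ∀ i : Fin (4/12+1), a i = b (i : ℕ) := by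
    intro i; obtain ⟨iv, hiv⟩ := i; simp only [hb]; rw [dif_pos hiv]
  simp only [key, Fin.sum_univ_succ, Fin.sum_univ_zero, Fin.val_zero, Fin.val_succ] at hPeq
  norm_num at hPeq
  have hExp : P = C (b 0 * 1) * X 0 ^ 4 * X 1 ^ 0
      + C (b 0 * 8) * X 0 ^ 1 * X 1 ^ 3 := by
    rw [hPeq]; unfold fIII
    simp only [map_add, map_mul, map_one, map_neg, map_ofNat]
    ring
  have e0 : b 0 * 1 = 1 := by
    rw [hExp] at h1
    simp only [coeffXY_add', coeffXY_CXY'] at h1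
    norm_num at h1
    linarith
  have hv0 : b 0 = 1 := by linarith
  intro d
  rw [hExp]
  simp only [coeff_add]
  repeat' apply add_nonneg
  all_goals refine coeff_term_nonneg' ?_ _ _ _
  all_goals simp only [hv0]; norm_num

lemma case8 (P : MvPolynomial (Fin 2) ℝ) (hP : IsExtremalWE3 8 P) :
    ∀ d : Fin 2 →₀ ℕ, 0 ≤ P.coeff d := by
  obtain ⟨⟨a, hPeq⟩, h1, h0⟩ := hP
  set b : ℕ → ℝ := fun j => if h : j < 8/12+1 then a ⟨j, h⟩ else 0 with hb
  have key : ∀ i : Fin (8/12+1), a i = b (i : ℕ) := by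
    intro i; obtain ⟨iv, hiv⟩ := i; simp only [hb]; rw [dif_pos hiv]
  simp only [key, Fin.sum_univ_succ, Fin.sum_univ_zero, Fin.val_zero, Fin.val_succ] at hPeq
  norm_num at hPeq
  have hExp : P = C (b 0 * 1) * X 0 ^ 8 * X 1 ^ 0
      + C (b 0 * 16) * X 0 ^ 5 * X 1 ^ 3
      + C (b 0 * 64) * X 0 ^ 2 * X 1 ^ 6 := by
    rw [hPeq]; unfold fIII
    simp only [map_add, map_mul, map_one, map_neg, map_ofNat]
    ring
  have e0 : b 0 * 1 = 1 := by
    rw [hExp] at h1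
    simp only [coeffXY_add', coeffXY_CXY'] at h1
    norm_num at h1
    linarith
  have hv0 : b 0 = 1 := by linarith
  intro d
  rw [hExp]
  simp only [coeff_add]
  repeat' apply add_nonneg
  all_goals refine coeff_term_nonneg' ?_ _ _ _
  all_goals simp only [hv0]; norm_num

lemma case12 (P : MvPolynomial (Fin 2) ℝ) (hP : IsExtremalWE3 12 P) :
    ∀ d : Fin 2 →₀ ℕ, 0 ≤ P.coeff d := by
  obtain ⟨⟨a, hPeq⟩, h1, h0⟩ := hP
  set b : ℕ → ℝ := fun j => if h : j < 12/12+1 then a ⟨j, h⟩ else 0 with hb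
  have key : ∀ i : Fin (12/12+1), a i = b (i : ℕ) := by
    intro i; obtain ⟨iv, hiv⟩ := i; simp only [hb]; rw [dif_pos hiv]
  simp only [key, Fin.sum_univ_succ, Fin.sum_univ_zero, Fin.val_zero, Fin.val_succ] at hPeq
  norm_num at hPeq
  have hExp : P = C (b 0 * 1) * X 0 ^ 12 * X 1 ^ 0
      + C (b 0 * 24 + b 1 * 1) * X 0 ^ 9 * X 1 ^ 3
      + C (b 0 * 192 + b 1 * (-3)) * X 0 ^ 6 * X 1 ^ 6
      + C (b 0 * 512 + b 1 * 3) * X 0 ^ 3 * X 1 ^ 9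
      + C (b 1 * (-1)) * X 0 ^ 0 * X 1 ^ 12 := by
    rw [hPeq]; unfold fIII; unfold gIII
    simp only [map_add, map_mul, map_one, map_neg, map_ofNat]
    ring
  have e0 : b 0 * 1 = 1 := by
    rw [hExp] at h1
    simp only [coeffXY_add', coeffXY_CXY'] at h1
    norm_num at h1
    linarith
  have e1 : b 0 * 24 + b 1 * 1 = 0 := by
    have h := h0 1 (by norm_num) (by norm_num)
    norm_num at h
    rw [hExp] at h
    simp only [coeffXY_add', coeffXY_CXY'] at h
    norm_num at h
    linarith
  have hv0 : b 0 = 1 := by linarith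
  have hv1 : b 1 = (-24) := by linarith
  intro d
  rw [hExp]
  simp only [coeff_add]
  repeat' apply add_nonneg
  all_goals refine coeff_term_nonneg' ?_ _ _ _
  all_goals simp only [hv0, hv1]; norm_num

lemma case16 (P : MvPolynomial (Fin 2) ℝ) (hP : IsExtremalWE3 16 P) :
    ∀ d : Fin 2 →₀ ℕ, 0 ≤ P.coeff d := by
  obtain ⟨⟨a, hPeq⟩, h1, h0⟩ := hP
  set b : ℕ → ℝ := fun j => if h : j < 16/12+1 then a ⟨j, h⟩ else 0 with hb
  have key : ∀ i : Fin (16/12+1), a i = b (i : ℕ) := by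
    intro i; obtain ⟨iv, hiv⟩ := i; simp only [hb]; rw [dif_pos hiv]
  simp only [key, Fin.sum_univ_succ, Fin.sum_univ_zero, Fin.val_zero, Fin.val_succ] at hPeq
  norm_num at hPeq
  have hExp : P = C (b 0 * 1) * X 0 ^ 16 * X 1 ^ 0
      + C (b 0 * 32 + b 1 * 1) * X 0 ^ 13 * X 1 ^ 3
      + C (b 0 * 384 + b 1 * 5) * X 0 ^ 10 * X 1 ^ 6
      + C (b 0 * 2048 + b 1 * (-21)) * X 0 ^ 7 * X 1 ^ 9
      + C (b 0 * 4096 + b 1 * 23) * X 0 ^ 4 * X 1 ^ 12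
      + C (b 1 * (-8)) * X 0 ^ 1 * X 1 ^ 15 := by
    rw [hPeq]; unfold fIII; unfold gIII
    simp only [map_add, map_mul, map_one, map_neg, map_ofNat]
    ring
  have e0 : b 0 * 1 = 1 := by
    rw [hExp] at h1
    simp only [coeffXY_add', coeffXY_CXY'] at h1
    norm_num at h1
    linarith
  have e1 : b 0 * 32 + b 1 * 1 = 0 := by
    have h := h0 1 (by norm_num) (by norm_num)
    norm_num at h
    rw [hExp] at h
    simp only [coeffXY_add', coeffXY_CXY'] at h
    norm_num at h
    linarith
  have hv0 : b 0 = 1 := by linarith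
  have hv1 : b 1 = (-32) := by linarith
  intro d
  rw [hExp]
  simp only [coeff_add]
  repeat' apply add_nonneg
  all_goals refine coeff_term_nonneg' ?_ _ _ _
  all_goals simp only [hv0, hv1]; norm_num

lemma case20 (P : MvPolynomial (Fin 2) ℝ) (hP : IsExtremalWE3 20 P) :
    ∀ d : Fin 2 →₀ ℕ, 0 ≤ P.coeff d := by
  obtain ⟨⟨a, hPeq⟩, h1, h0⟩ := hP
  set b : ℕ → ℝ := fun j => if h : j < 20/12+1 then a ⟨j, h⟩ else 0 with hb
  have key : ∀ i : Fin (20/12+1), a i = b (i : ℕ) := by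
    intro i; obtain ⟨iv, hiv⟩ := i; simp only [hb]; rw [dif_pos hiv]
  simp only [key, Fin.sum_univ_succ, Fin.sum_univ_zero, Fin.val_zero, Fin.val_succ] at hPeq
  norm_num at hPeq
  have hExp : P = C (b 0 * 1) * X 0 ^ 20 * X 1 ^ 0
      + C (b 0 * 40 + b 1 * 1) * X 0 ^ 17 * X 1 ^ 3
      + C (b 0 * 640 + b 1 * 13) * X 0 ^ 14 * X 1 ^ 6
      + C (b 0 * 5120 + b 1 * 19) * X 0 ^ 11 * X 1 ^ 9
      + C (b 0 * 20480 + b 1 * (-145)) * X 0 ^ 8 * X 1 ^ 12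
      + C (b 0 * 32768 + b 1 * 176) * X 0 ^ 5 * X 1 ^ 15
      + C (b 1 * (-64)) * X 0 ^ 2 * X 1 ^ 18 := by
    rw [hPeq]; unfold fIII; unfold gIII
    simp only [map_add, map_mul, map_one, map_neg, map_ofNat]
    ring
  have e0 : b 0 * 1 = 1 := by
    rw [hExp] at h1
    simp only [coeffXY_add', coeffXY_CXY'] at h1
    norm_num at h1
    linarith
  have e1 : b 0 * 40 + b 1 * 1 = 0 := by
    have h := h0 1 (by norm_num) (by norm_num)
    norm_num at h
    rw [hExp] at h
    simp only [coeffXY_add', coeffXY_CXY'] at h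
    norm_num at h
    linarith
  have hv0 : b 0 = 1 := by linarith
  have hv1 : b 1 = (-40) := by linarith
  intro d
  rw [hExp]
  simp only [coeff_add]
  repeat' apply add_nonneg
  all_goals refine coeff_term_nonneg' ?_ _ _ _
  all_goals simp only [hv0, hv1]; norm_num

lemma case24 (P : MvPolynomial (Fin 2) ℝ) (hP : IsExtremalWE3 24 P) :
    ∀ d : Fin 2 →₀ ℕ, 0 ≤ P.coeff d := by
  obtain ⟨⟨a, hPeq⟩, h1, h0⟩ := hP
  set b : ℕ → ℝ := fun j => if h : j < 24/12+1 then a ⟨j, h⟩ else 0 with hb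
  have key : ∀ i : Fin (24/12+1), a i = b (i : ℕ) := by
    intro i; obtain ⟨iv, hiv⟩ := i; simp only [hb]; rw [dif_pos hiv]
  simp only [key, Fin.sum_univ_succ, Fin.sum_univ_zero, Fin.val_zero, Fin.val_succ] at hPeq
  norm_num at hPeq
  have hExp : P = C (b 0 * 1) * X 0 ^ 24 * X 1 ^ 0
      + C (b 0 * 48 + b 1 * 1) * X 0 ^ 21 * X 1 ^ 3
      + C (b 0 * 960 + b 1 * 21 + b 2 * 1) * X 0 ^ 18 * X 1 ^ 6
      + C (b 0 * 10240 + b 1 * 123 + b 2 * (-6)) * X 0 ^ 15 * X 1 ^ 9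
      + C (b 0 * 61440 + b 1 * 7 + b 2 * 15) * X 0 ^ 12 * X 1 ^ 12
      + C (b 0 * 196608 + b 1 * (-984) + b 2 * (-20)) * X 0 ^ 9 * X 1 ^ 15
      + C (b 0 * 262144 + b 1 * 1344 + b 2 * 15) * X 0 ^ 6 * X 1 ^ 18
      + C (b 1 * (-512) + b 2 * (-6)) * X 0 ^ 3 * X 1 ^ 21
      + C (b 2 * 1) * X 0 ^ 0 * X 1 ^ 24 := by
    rw [hPeq]; unfold fIII; unfold gIII
    simp only [map_add, map_mul, map_one, map_neg, map_ofNat]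
    ring
  have e0 : b 0 * 1 = 1 := by
    rw [hExp] at h1
    simp only [coeffXY_add', coeffXY_CXY'] at h1
    norm_num at h1
    linarith
  have e1 : b 0 * 48 + b 1 * 1 = 0 := by
    have h := h0 1 (by norm_num) (by norm_num)
    norm_num at h
    rw [hExp] at h
    simp only [coeffXY_add', coeffXY_CXY'] at h
    norm_num at h
    linarith
  have e2 : b 0 * 960 + b 1 * 21 + b 2 * 1 = 0 := by
    have h := h0 2 (by norm_num) (by norm_num)
    norm_num at h
    rw [hExp] at h
    simp only [coeffXY_add', coeffXY_CXY'] at h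
    norm_num at h
    linarith
  have hv0 : b 0 = 1 := by linarith
  have hv1 : b 1 = (-48) := by linarith
  have hv2 : b 2 = 48 := by linarith
  intro d
  rw [hExp]
  simp only [coeff_add]
  repeat' apply add_nonneg
  all_goals refine coeff_term_nonneg' ?_ _ _ _
  all_goals simp only [hv0, hv1, hv2]; norm_num

lemma case28 (P : MvPolynomial (Fin 2) ℝ) (hP : IsExtremalWE3 28 P) :
    ∀ d : Fin 2 →₀ ℕ, 0 ≤ P.coeff d := by
  obtain ⟨⟨a, hPeq⟩, h1, h0⟩ := hP
  set b : ℕ → ℝ := fun j => if h : j < 28/12+1 then a ⟨j, h⟩ else 0 with hb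
  have key : ∀ i : Fin (28/12+1), a i = b (i : ℕ) := by
    intro i; obtain ⟨iv, hiv⟩ := i; simp only [hb]; rw [dif_pos hiv]
  simp only [key, Fin.sum_univ_succ, Fin.sum_univ_zero, Fin.val_zero, Fin.val_succ] at hPeq
  norm_num at hPeq
  have hExp : P = C (b 0 * 1) * X 0 ^ 28 * X 1 ^ 0
      + C (b 0 * 56 + b 1 * 1) * X 0 ^ 25 * X 1 ^ 3
      + C (b 0 * 1344 + b 1 * 29 + b 2 * 1) * X 0 ^ 22 * X 1 ^ 6
      + C (b 0 * 17920 + b 1 * 291 + b 2 * 2) * X 0 ^ 19 * X 1 ^ 9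
      + C (b 0 * 143360 + b 1 * 991 + b 2 * (-33)) * X 0 ^ 16 * X 1 ^ 12
      + C (b 0 * 688128 + b 1 * (-928) + b 2 * 100) * X 0 ^ 13 * X 1 ^ 15
      + C (b 0 * 1835008 + b 1 * (-6528) + b 2 * (-145)) * X 0 ^ 10 * X 1 ^ 18
      + C (b 0 * 2097152 + b 1 * 10240 + b 2 * 114) * X 0 ^ 7 * X 1 ^ 21
      + C (b 1 * (-4096) + b 2 * (-47)) * X 0 ^ 4 * X 1 ^ 24
      + C (b 2 * 8) * X 0 ^ 1 * X 1 ^ 27 := by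
    rw [hPeq]; unfold fIII; unfold gIII
    simp only [map_add, map_mul, map_one, map_neg, map_ofNat]
    ring
  have e0 : b 0 * 1 = 1 := by
    rw [hExp] at h1
    simp only [coeffXY_add', coeffXY_CXY'] at h1
    norm_num at h1
    linarith
  have e1 : b 0 * 56 + b 1 * 1 = 0 := by
    have h := h0 1 (by norm_num) (by norm_num)
    norm_num at h
    rw [hExp] at h
    simp only [coeffXY_add', coeffXY_CXY'] at h
    norm_num at h
    linarith
  have e2 : b 0 * 1344 + b 1 * 29 + b 2 * 1 = 0 := by
    have h := h0 2 (by norm_num) (by norm_num)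
    norm_num at h
    rw [hExp] at h
    simp only [coeffXY_add', coeffXY_CXY'] at h
    norm_num at h
    linarith
  have hv0 : b 0 = 1 := by linarith
  have hv1 : b 1 = (-56) := by linarith
  have hv2 : b 2 = 280 := by linarith
  intro d
  rw [hExp]
  simp only [coeff_add]
  repeat' apply add_nonneg
  all_goals refine coeff_term_nonneg' ?_ _ _ _
  all_goals simp only [hv0, hv1, hv2]; norm_num

lemma case32 (P : MvPolynomial (Fin 2) ℝ) (hP : IsExtremalWE3 32 P) :
    ∀ d : Fin 2 →₀ ℕ, 0 ≤ P.coeff d := by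
  obtain ⟨⟨a, hPeq⟩, h1, h0⟩ := hP
  set b : ℕ → ℝ := fun j => if h : j < 32/12+1 then a ⟨j, h⟩ else 0 with hb
  have key : ∀ i : Fin (32/12+1), a i = b (i : ℕ) := by
    intro i; obtain ⟨iv, hiv⟩ := i; simp only [hb]; rw [dif_pos hiv]
  simp only [key, Fin.sum_univ_succ, Fin.sum_univ_zero, Fin.val_zero, Fin.val_succ] at hPeq
  norm_num at hPeq
  have hExp : P = C (b 0 * 1) * X 0 ^ 32 * X 1 ^ 0
      + C (b 0 * 64 + b 1 * 1) * X 0 ^ 29 * X 1 ^ 3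
      + C (b 0 * 1792 + b 1 * 37 + b 2 * 1) * X 0 ^ 26 * X 1 ^ 6
      + C (b 0 * 28672 + b 1 * 523 + b 2 * 10) * X 0 ^ 23 * X 1 ^ 9
      + C (b 0 * 286720 + b 1 * 3319 + b 2 * (-17)) * X 0 ^ 20 * X 1 ^ 12
      + C (b 0 * 1835008 + b 1 * 7000 + b 2 * (-164)) * X 0 ^ 17 * X 1 ^ 15
      + C (b 0 * 7340032 + b 1 * (-13952) + b 2 * 655) * X 0 ^ 14 * X 1 ^ 18
      + C (b 0 * 16777216 + b 1 * (-41984) + b 2 * (-1046)) * X 0 ^ 11 * X 1 ^ 21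
      + C (b 0 * 16777216 + b 1 * 77824 + b 2 * 865) * X 0 ^ 8 * X 1 ^ 24
      + C (b 1 * (-32768) + b 2 * (-368)) * X 0 ^ 5 * X 1 ^ 27
      + C (b 2 * 64) * X 0 ^ 2 * X 1 ^ 30 := by
    rw [hPeq]; unfold fIII; unfold gIII
    simp only [map_add, map_mul, map_one, map_neg, map_ofNat]
    ring
  have e0 : b 0 * 1 = 1 := by
    rw [hExp] at h1
    simp only [coeffXY_add', coeffXY_CXY'] at h1
    norm_num at h1
    linarith
  have e1 : b 0 * 64 + b 1 * 1 = 0 := by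
    have h := h0 1 (by norm_num) (by norm_num)
    norm_num at h
    rw [hExp] at h
    simp only [coeffXY_add', coeffXY_CXY'] at h
    norm_num at h
    linarith
  have e2 : b 0 * 1792 + b 1 * 37 + b 2 * 1 = 0 := by
    have h := h0 2 (by norm_num) (by norm_num)
    norm_num at h
    rw [hExp] at h
    simp only [coeffXY_add', coeffXY_CXY'] at h
    norm_num at h
    linarith
  have hv0 : b 0 = 1 := by linarith
  have hv1 : b 1 = (-64) := by linarith
  have hv2 : b 2 = 576 := by linarith
  intro d
  rw [hExp]
  simp only [coeff_add]
  repeat' apply add_nonneg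
  all_goals refine coeff_term_nonneg' ?_ _ _ _
  all_goals simp only [hv0, hv1, hv2]; norm_num

lemma case36 (P : MvPolynomial (Fin 2) ℝ) (hP : IsExtremalWE3 36 P) :
    ∀ d : Fin 2 →₀ ℕ, 0 ≤ P.coeff d := by
  obtain ⟨⟨a, hPeq⟩, h1, h0⟩ := hP
  set b : ℕ → ℝ := fun j => if h : j < 36/12+1 then a ⟨j, h⟩ else 0 with hb
  have key : ∀ i : Fin (36/12+1), a i = b (i : ℕ) := by
    intro i; obtain ⟨iv, hiv⟩ := i; simp only [hb]; rw [dif_pos hiv]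
  simp only [key, Fin.sum_univ_succ, Fin.sum_univ_zero, Fin.val_zero, Fin.val_succ] at hPeq
  norm_num at hPeq
  have hExp : P = C (b 0 * 1) * X 0 ^ 36 * X 1 ^ 0
      + C (b 0 * 72 + b 1 * 1) * X 0 ^ 33 * X 1 ^ 3
      + C (b 0 * 2304 + b 1 * 45 + b 2 * 1) * X 0 ^ 30 * X 1 ^ 6
      + C (b 0 * 43008 + b 1 * 819 + b 2 * 18 + b 3 * 1) * X 0 ^ 27 * X 1 ^ 9
      + C (b 0 * 516096 + b 1 * 7503 + b 2 * 63 + b 3 * (-9)) * X 0 ^ 24 * X 1 ^ 12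
      + C (b 0 * 4128768 + b 1 * 33552 + b 2 * (-300) + b 3 * 36) * X 0 ^ 21 * X 1 ^ 15
      + C (b 0 * 22020096 + b 1 * 42048 + b 2 * (-657) + b 3 * (-84)) * X 0 ^ 18 * X 1 ^ 18
      + C (b 0 * 75497472 + b 1 * (-153600) + b 2 * 4194 + b 3 * 126) * X 0 ^ 15 * X 1 ^ 21
      + C (b 0 * 150994944 + b 1 * (-258048) + b 2 * (-7503) + b 3 * (-126)) * X 0 ^ 12 * X 1 ^ 24
      + C (b 0 * 134217728 + b 1 * 589824 + b 2 * 6552 + b 3 * 84) * X 0 ^ 9 * X 1 ^ 27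
      + C (b 1 * (-262144) + b 2 * (-2880) + b 3 * (-36)) * X 0 ^ 6 * X 1 ^ 30
      + C (b 2 * 512 + b 3 * 9) * X 0 ^ 3 * X 1 ^ 33
      + C (b 3 * (-1)) * X 0 ^ 0 * X 1 ^ 36 := by
    rw [hPeq]; unfold fIII; unfold gIII
    simp only [map_add, map_mul, map_one, map_neg, map_ofNat]
    ring
  have e0 : b 0 * 1 = 1 := by
    rw [hExp] at h1
    simp only [coeffXY_add', coeffXY_CXY'] at h1
    norm_num at h1
    linarith
  have e1 : b 0 * 72 + b 1 * 1 = 0 := by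
    have h := h0 1 (by norm_num) (by norm_num)
    norm_num at h
    rw [hExp] at h
    simp only [coeffXY_add', coeffXY_CXY'] at h
    norm_num at h
    linarith
  have e2 : b 0 * 2304 + b 1 * 45 + b 2 * 1 = 0 := by
    have h := h0 2 (by norm_num) (by norm_num)
    norm_num at h
    rw [hExp] at h
    simp only [coeffXY_add', coeffXY_CXY'] at h
    norm_num at h
    linarith
  have e3 : b 0 * 43008 + b 1 * 819 + b 2 * 18 + b 3 * 1 = 0 := by
    have h := h0 3 (by norm_num) (by norm_num)
    norm_num at h
    rw [hExp] at h
    simp only [coeffXY_add', coeffXY_CXY'] at h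
    norm_num at h
    linarith
  have hv0 : b 0 = 1 := by linarith
  have hv1 : b 1 = (-72) := by linarith
  have hv2 : b 2 = 936 := by linarith
  have hv3 : b 3 = (-888) := by linarith
  intro d
  rw [hExp]
  simp only [coeff_add]
  repeat' apply add_nonneg
  all_goals refine coeff_term_nonneg' ?_ _ _ _
  all_goals simp only [hv0, hv1, hv2, hv3]; norm_num

lemma case40 (P : MvPolynomial (Fin 2) ℝ) (hP : IsExtremalWE3 40 P) :
    ∀ d : Fin 2 →₀ ℕ, 0 ≤ P.coeff d := by
  obtain ⟨⟨a, hPeq⟩, h1, h0⟩ := hP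
  set b : ℕ → ℝ := fun j => if h : j < 40/12+1 then a ⟨j, h⟩ else 0 with hb
  have key : ∀ i : Fin (40/12+1), a i = b (i : ℕ) := by
    intro i; obtain ⟨iv, hiv⟩ := i; simp only [hb]; rw [dif_pos hiv]
  simp only [key, Fin.sum_univ_succ, Fin.sum_univ_zero, Fin.val_zero, Fin.val_succ] at hPeq
  norm_num at hPeq
  have hExp : P = C (b 0 * 1) * X 0 ^ 40 * X 1 ^ 0
      + C (b 0 * 80 + b 1 * 1) * X 0 ^ 37 * X 1 ^ 3
      + C (b 0 * 2880 + b 1 * 53 + b 2 * 1) * X 0 ^ 34 * X 1 ^ 6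
      + C (b 0 * 61440 + b 1 * 1179 + b 2 * 26 + b 3 * 1) * X 0 ^ 31 * X 1 ^ 9
      + C (b 0 * 860160 + b 1 * 14055 + b 2 * 207 + b 3 * (-1)) * X 0 ^ 28 * X 1 ^ 12
      + C (b 0 * 8257536 + b 1 * 93576 + b 2 * 204 + b 3 * (-36)) * X 0 ^ 25 * X 1 ^ 15
      + C (b 0 * 55050240 + b 1 * 310464 + b 2 * (-3057) + b 3 * 204) * X 0 ^ 22 * X 1 ^ 18
      + C (b 0 * 251658240 + b 1 * 182784 + b 2 * (-1062) + b 3 * (-546)) * X 0 ^ 19 * X 1 ^ 21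
      + C (b 0 * 754974720 + b 1 * (-1486848) + b 2 * 26049 + b 3 * 882) * X 0 ^ 16 * X 1 ^ 24
      + C (b 0 * 1342177280 + b 1 * (-1474560) + b 2 * (-53472) + b 3 * (-924)) * X 0 ^ 13 * X 1 ^ 27
      + C (b 0 * 1073741824 + b 1 * 4456448 + b 2 * 49536 + b 3 * 636) * X 0 ^ 10 * X 1 ^ 30
      + C (b 1 * (-2097152) + b 2 * (-22528) + b 3 * (-279)) * X 0 ^ 7 * X 1 ^ 33
      + C (b 2 * 4096 + b 3 * 71) * X 0 ^ 4 * X 1 ^ 36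
      + C (b 3 * (-8)) * X 0 ^ 1 * X 1 ^ 39 := by
    rw [hPeq]; unfold fIII; unfold gIII
    simp only [map_add, map_mul, map_one, map_neg, map_ofNat]
    ring
  have e0 : b 0 * 1 = 1 := by
    rw [hExp] at h1
    simp only [coeffXY_add', coeffXY_CXY'] at h1
    norm_num at h1
    linarith
  have e1 : b 0 * 80 + b 1 * 1 = 0 := by
    have h := h0 1 (by norm_num) (by norm_num)
    norm_num at h
    rw [hExp] at h
    simp only [coeffXY_add', coeffXY_CXY'] at h
    norm_num at h
    linarith
  have e2 : b 0 * 2880 + b 1 * 53 + b 2 * 1 = 0 := by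
    have h := h0 2 (by norm_num) (by norm_num)
    norm_num at h
    rw [hExp] at h
    simp only [coeffXY_add', coeffXY_CXY'] at h
    norm_num at h
    linarith
  have e3 : b 0 * 61440 + b 1 * 1179 + b 2 * 26 + b 3 * 1 = 0 := by
    have h := h0 3 (by norm_num) (by norm_num)
    norm_num at h
    rw [hExp] at h
    simp only [coeffXY_add', coeffXY_CXY'] at h
    norm_num at h
    linarith
  have hv0 : b 0 = 1 := by linarith
  have hv1 : b 1 = (-80) := by linarith
  have hv2 : b 2 = 1360 := by linarith
  have hv3 : b 3 = (-2480) := by linarith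
  intro d
  rw [hExp]
  simp only [coeff_add]
  repeat' apply add_nonneg
  all_goals refine coeff_term_nonneg' ?_ _ _ _
  all_goals simp only [hv0, hv1, hv2, hv3]; norm_num

lemma case44 (P : MvPolynomial (Fin 2) ℝ) (hP : IsExtremalWE3 44 P) :
    ∀ d : Fin 2 →₀ ℕ, 0 ≤ P.coeff d := by
  obtain ⟨⟨a, hPeq⟩, h1, h0⟩ := hP
  set b : ℕ → ℝ := fun j => if h : j < 44/12+1 then a ⟨j, h⟩ else 0 with hb
  have key : ∀ i : Fin (44/12+1), a i = b (i : ℕ) := by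
    intro i; obtain ⟨iv, hiv⟩ := i; simp only [hb]; rw [dif_pos hiv]
  simp only [key, Fin.sum_univ_succ, Fin.sum_univ_zero, Fin.val_zero, Fin.val_succ] at hPeq
  norm_num at hPeq
  have hExp : P = C (b 0 * 1) * X 0 ^ 44 * X 1 ^ 0
      + C (b 0 * 88 + b 1 * 1) * X 0 ^ 41 * X 1 ^ 3
      + C (b 0 * 3520 + b 1 * 61 + b 2 * 1) * X 0 ^ 38 * X 1 ^ 6
      + C (b 0 * 84480 + b 1 * 1603 + b 2 * 34 + b 3 * 1) * X 0 ^ 35 * X 1 ^ 9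
      + C (b 0 * 1351680 + b 1 * 23487 + b 2 * 415 + b 3 * 7) * X 0 ^ 32 * X 1 ^ 12
      + C (b 0 * 15138816 + b 1 * 206016 + b 2 * 1860 + b 3 * (-44)) * X 0 ^ 29 * X 1 ^ 15
      + C (b 0 * 121110528 + b 1 * 1059072 + b 2 * (-1425) + b 3 * (-84)) * X 0 ^ 26 * X 1 ^ 18
      + C (b 0 * 692060160 + b 1 * 2666496 + b 2 * (-25518) + b 3 * 1086) * X 0 ^ 23 * X 1 ^ 21
      + C (b 0 * 2768240640 + b 1 * (-24576) + b 2 * 17553 + b 3 * (-3486)) * X 0 ^ 20 * X 1 ^ 24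
      + C (b 0 * 7381975040 + b 1 * (-13369344) + b 2 * 154920 + b 3 * 6132) * X 0 ^ 17 * X 1 ^ 27
      + C (b 0 * 11811160064 + b 1 * (-7340032) + b 2 * (-378240) + b 3 * (-6756)) * X 0 ^ 14 * X 1 ^ 30
      + C (b 0 * 8589934592 + b 1 * 33554432 + b 2 * 373760 + b 3 * 4809) * X 0 ^ 11 * X 1 ^ 33
      + C (b 1 * (-16777216) + b 2 * (-176128) + b 3 * (-2161)) * X 0 ^ 8 * X 1 ^ 36
      + C (b 2 * 32768 + b 3 * 560) * X 0 ^ 5 * X 1 ^ 39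
      + C (b 3 * (-64)) * X 0 ^ 2 * X 1 ^ 42 := by
    rw [hPeq]; unfold fIII; unfold gIII
    simp only [map_add, map_mul, map_one, map_neg, map_ofNat]
    ring
  have e0 : b 0 * 1 = 1 := by
    rw [hExp] at h1
    simp only [coeffXY_add', coeffXY_CXY'] at h1
    norm_num at h1
    linarith
  have e1 : b 0 * 88 + b 1 * 1 = 0 := by
    have h := h0 1 (by norm_num) (by norm_num)
    norm_num at h
    rw [hExp] at h
    simp only [coeffXY_add', coeffXY_CXY'] at h
    norm_num at h
    linarith
  have e2 : b 0 * 3520 + b 1 * 61 + b 2 * 1 = 0 := by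
    have h := h0 2 (by norm_num) (by norm_num)
    norm_num at h
    rw [hExp] at h
    simp only [coeffXY_add', coeffXY_CXY'] at h
    norm_num at h
    linarith
  have e3 : b 0 * 84480 + b 1 * 1603 + b 2 * 34 + b 3 * 1 = 0 := by
    have h := h0 3 (by norm_num) (by norm_num)
    norm_num at h
    rw [hExp] at h
    simp only [coeffXY_add', coeffXY_CXY'] at h
    norm_num at h
    linarith
  have hv0 : b 0 = 1 := by linarith
  have hv1 : b 1 = (-88) := by linarith
  have hv2 : b 2 = 1848 := by linarith
  have hv3 : b 3 = (-6248) := by linarith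
  intro d
  rw [hExp]
  simp only [coeff_add]
  repeat' apply add_nonneg
  all_goals refine coeff_term_nonneg' ?_ _ _ _
  all_goals simp only [hv0, hv1, hv2, hv3]; norm_num

lemma case48 (P : MvPolynomial (Fin 2) ℝ) (hP : IsExtremalWE3 48 P) :
    ∀ d : Fin 2 →₀ ℕ, 0 ≤ P.coeff d := by
  obtain ⟨⟨a, hPeq⟩, h1, h0⟩ := hP
  set b : ℕ → ℝ := fun j => if h : j < 48/12+1 then a ⟨j, h⟩ else 0 with hb
  have key : ∀ i : Fin (48/12+1), a i = b (i : ℕ) := by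
    intro i; obtain ⟨iv, hiv⟩ := i; simp only [hb]; rw [dif_pos hiv]
  simp only [key, Fin.sum_univ_succ, Fin.sum_univ_zero, Fin.val_zero, Fin.val_succ] at hPeq
  norm_num at hPeq
  have hExp : P = C (b 0 * 1) * X 0 ^ 48 * X 1 ^ 0
      + C (b 0 * 96 + b 1 * 1) * X 0 ^ 45 * X 1 ^ 3
      + C (b 0 * 4224 + b 1 * 69 + b 2 * 1) * X 0 ^ 42 * X 1 ^ 6
      + C (b 0 * 112640 + b 1 * 2091 + b 2 * 42 + b 3 * 1) * X 0 ^ 39 * X 1 ^ 9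
      + C (b 0 * 2027520 + b 1 * 36311 + b 2 * 687 + b 3 * 15 + b 4 * 1) * X 0 ^ 36 * X 1 ^ 12
      + C (b 0 * 25952256 + b 1 * 393912 + b 2 * 5180 + b 3 * 12 + b 4 * (-12)) * X 0 ^ 33 * X 1 ^ 15
      + C (b 0 * 242221056 + b 1 * 2707200 + b 2 * 13455 + b 3 * (-436) + b 4 * 66) * X 0 ^ 30 * X 1 ^ 18
      + C (b 0 * 1660944384 + b 1 * 11139072 + b 2 * (-36918) + b 3 * 414 + b 4 * (-220)) * X 0 ^ 27 * X 1 ^ 21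
      + C (b 0 * 8304721920 + b 1 * 21307392 + b 2 * (-186591) + b 3 * 5202 + b 4 * 495) * X 0 ^ 24 * X 1 ^ 24
      + C (b 0 * 29527900160 + b 1 * (-13565952) + b 2 * 295344 + b 3 * (-21756) + b 4 * (-792)) * X 0 ^ 21 * X 1 ^ 27
      + C (b 0 * 70866960384 + b 1 * (-114294784) + b 2 * 861120 + b 3 * 42300 + b 4 * 924) * X 0 ^ 18 * X 1 ^ 30
      + C (b 0 * 103079215104 + b 1 * (-25165824) + b 2 * (-2652160) + b 3 * (-49239) + b 4 * (-792)) * X 0 ^ 15 * X 1 ^ 33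
      + C (b 0 * 68719476736 + b 1 * 251658240 + b 2 * 2813952 + b 3 * 36311 + b 4 * 495) * X 0 ^ 12 * X 1 ^ 36
      + C (b 1 * (-134217728) + b 2 * (-1376256) + b 3 * (-16728) + b 4 * (-220)) * X 0 ^ 9 * X 1 ^ 39
      + C (b 2 * 262144 + b 3 * 4416 + b 4 * 66) * X 0 ^ 6 * X 1 ^ 42
      + C (b 3 * (-512) + b 4 * (-12)) * X 0 ^ 3 * X 1 ^ 45
      + C (b 4 * 1) * X 0 ^ 0 * X 1 ^ 48 := by
    rw [hPeq]; unfold fIII; unfold gIII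
    simp only [map_add, map_mul, map_one, map_neg, map_ofNat]
    ring
  have e0 : b 0 * 1 = 1 := by
    rw [hExp] at h1
    simp only [coeffXY_add', coeffXY_CXY'] at h1
    norm_num at h1
    linarith
  have e1 : b 0 * 96 + b 1 * 1 = 0 := by
    have h := h0 1 (by norm_num) (by norm_num)
    norm_num at h
    rw [hExp] at h
    simp only [coeffXY_add', coeffXY_CXY'] at h
    norm_num at h
    linarith
  have e2 : b 0 * 4224 + b 1 * 69 + b 2 * 1 = 0 := by
    have h := h0 2 (by norm_num) (by norm_num)
    norm_num at h
    rw [hExp] at h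
    simp only [coeffXY_add', coeffXY_CXY'] at h
    norm_num at h
    linarith
  have e3 : b 0 * 112640 + b 1 * 2091 + b 2 * 42 + b 3 * 1 = 0 := by
    have h := h0 3 (by norm_num) (by norm_num)
    norm_num at h
    rw [hExp] at h
    simp only [coeffXY_add', coeffXY_CXY'] at h
    norm_num at h
    linarith
  have e4 : b 0 * 2027520 + b 1 * 36311 + b 2 * 687 + b 3 * 15 + b 4 * 1 = 0 := by
    have h := h0 4 (by norm_num) (by norm_num)
    norm_num at h
    rw [hExp] at h
    simp only [coeffXY_add', coeffXY_CXY'] at h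
    norm_num at h
    linarith
  have hv0 : b 0 = 1 := by linarith
  have hv1 : b 1 = (-96) := by linarith
  have hv2 : b 2 = 2400 := by linarith
  have hv3 : b 3 = (-12704) := by linarith
  have hv4 : b 4 = 96 := by linarith
  intro d
  rw [hExp]
  simp only [coeff_add]
  repeat' apply add_nonneg
  all_goals refine coeff_term_nonneg' ?_ _ _ _
  all_goals simp only [hv0, hv1, hv2, hv3, hv4]; norm_num

lemma case52 (P : MvPolynomial (Fin 2) ℝ) (hP : IsExtremalWE3 52 P) :
    ∀ d : Fin 2 →₀ ℕ, 0 ≤ P.coeff d := by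
  obtain ⟨⟨a, hPeq⟩, h1, h0⟩ := hP
  set b : ℕ → ℝ := fun j => if h : j < 52/12+1 then a ⟨j, h⟩ else 0 with hb
  have key : ∀ i : Fin (52/12+1), a i = b (i : ℕ) := by
    intro i; obtain ⟨iv, hiv⟩ := i; simp only [hb]; rw [dif_pos hiv]
  simp only [key, Fin.sum_univ_succ, Fin.sum_univ_zero, Fin.val_zero, Fin.val_succ] at hPeq
  norm_num at hPeq
  have hExp : P = C (b 0 * 1) * X 0 ^ 52 * X 1 ^ 0
      + C (b 0 * 104 + b 1 * 1) * X 0 ^ 49 * X 1 ^ 3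
      + C (b 0 * 4992 + b 1 * 77 + b 2 * 1) * X 0 ^ 46 * X 1 ^ 6
      + C (b 0 * 146432 + b 1 * 2643 + b 2 * 50 + b 3 * 1) * X 0 ^ 43 * X 1 ^ 9
      + C (b 0 * 2928640 + b 1 * 53039 + b 2 * 1023 + b 3 * 23 + b 4 * 1) * X 0 ^ 40 * X 1 ^ 12
      + C (b 0 * 42172416 + b 1 * 684400 + b 2 * 10676 + b 3 * 132 + b 4 * (-4)) * X 0 ^ 37 * X 1 ^ 15
      + C (b 0 * 449839104 + b 1 * 5858496 + b 2 * 54895 + b 3 * (-340) + b 4 * (-30)) * X 0 ^ 34 * X 1 ^ 18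
      + C (b 0 * 3598712832 + b 1 * 32796672 + b 2 * 70722 + b 3 * (-3074) + b 4 * 308) * X 0 ^ 31 * X 1 ^ 21
      + C (b 0 * 21592276992 + b 1 * 110419968 + b 2 * (-481935) + b 3 * 8514 + b 4 * (-1265)) * X 0 ^ 28 * X 1 ^ 24
      + C (b 0 * 95965675520 + b 1 * 156893184 + b 2 * (-1197384) + b 3 * 19860 + b 4 * 3168) * X 0 ^ 25 * X 1 ^ 27
      + C (b 0 * 307090161664 + b 1 * (-222822400) + b 2 * 3223872 + b 3 * (-131748) + b 4 * (-5412)) * X 0 ^ 22 * X 1 ^ 30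
      + C (b 0 * 670014898176 + b 1 * (-939524096) + b 2 * 4236800 + b 3 * 289161 + b 4 * 6600) * X 0 ^ 19 * X 1 ^ 33
      + C (b 0 * 893353197568 + b 1 * 50331648 + b 2 * (-18403328) + b 3 * (-357601) + b 4 * (-5841)) * X 0 ^ 16 * X 1 ^ 36
      + C (b 0 * 549755813888 + b 1 * 1879048192 + b 2 * 21135360 + b 3 * 273760 + b 4 * 3740) * X 0 ^ 13 * X 1 ^ 39
      + C (b 1 * (-1073741824) + b 2 * (-10747904) + b 3 * (-129408) + b 4 * (-1694)) * X 0 ^ 10 * X 1 ^ 42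
      + C (b 2 * 2097152 + b 3 * 34816 + b 4 * 516) * X 0 ^ 7 * X 1 ^ 45
      + C (b 3 * (-4096) + b 4 * (-95)) * X 0 ^ 4 * X 1 ^ 48
      + C (b 4 * 8) * X 0 ^ 1 * X 1 ^ 51 := by
    rw [hPeq]; unfold fIII; unfold gIII
    simp only [map_add, map_mul, map_one, map_neg, map_ofNat]
    ring
  have e0 : b 0 * 1 = 1 := by
    rw [hExp] at h1
    simp only [coeffXY_add', coeffXY_CXY'] at h1
    norm_num at h1
    linarith
  have e1 : b 0 * 104 + b 1 * 1 = 0 := by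
    have h := h0 1 (by norm_num) (by norm_num)
    norm_num at h
    rw [hExp] at h
    simp only [coeffXY_add', coeffXY_CXY'] at h
    norm_num at h
    linarith
  have e2 : b 0 * 4992 + b 1 * 77 + b 2 * 1 = 0 := by
    have h := h0 2 (by norm_num) (by norm_num)
    norm_num at h
    rw [hExp] at h
    simp only [coeffXY_add', coeffXY_CXY'] at h
    norm_num at h
    linarith
  have e3 : b 0 * 146432 + b 1 * 2643 + b 2 * 50 + b 3 * 1 = 0 := by
    have h := h0 3 (by norm_num) (by norm_num)
    norm_num at h
    rw [hExp] at h
    simp only [coeffXY_add', coeffXY_CXY'] at h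
    norm_num at h
    linarith
  have e4 : b 0 * 2928640 + b 1 * 53039 + b 2 * 1023 + b 3 * 23 + b 4 * 1 = 0 := by
    have h := h0 4 (by norm_num) (by norm_num)
    norm_num at h
    rw [hExp] at h
    simp only [coeffXY_add', coeffXY_CXY'] at h
    norm_num at h
    linarith
  have hv0 : b 0 = 1 := by linarith
  have hv1 : b 1 = (-104) := by linarith
  have hv2 : b 2 = 3016 := by linarith
  have hv3 : b 3 = (-22360) := by linarith
  have hv4 : b 4 = 16328 := by linarith
  intro d
  rw [hExp]
  simp only [coeff_add]
  repeat' apply add_nonneg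
  all_goals refine coeff_term_nonneg' ?_ _ _ _
  all_goals simp only [hv0, hv1, hv2, hv3, hv4]; norm_num

lemma case56 (P : MvPolynomial (Fin 2) ℝ) (hP : IsExtremalWE3 56 P) :
    ∀ d : Fin 2 →₀ ℕ, 0 ≤ P.coeff d := by
  obtain ⟨⟨a, hPeq⟩, h1, h0⟩ := hP
  set b : ℕ → ℝ := fun j => if h : j < 56/12+1 then a ⟨j, h⟩ else 0 with hb
  have key : ∀ i : Fin (56/12+1), a i = b (i : ℕ) := by
    intro i; obtain ⟨iv, hiv⟩ := i; simp only [hb]; rw [dif_pos hiv]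
  simp only [key, Fin.sum_univ_succ, Fin.sum_univ_zero, Fin.val_zero, Fin.val_succ] at hPeq
  norm_num at hPeq
  have hExp : P = C (b 0 * 1) * X 0 ^ 56 * X 1 ^ 0
      + C (b 0 * 112 + b 1 * 1) * X 0 ^ 53 * X 1 ^ 3
      + C (b 0 * 5824 + b 1 * 85 + b 2 * 1) * X 0 ^ 50 * X 1 ^ 6
      + C (b 0 * 186368 + b 1 * 3259 + b 2 * 58 + b 3 * 1) * X 0 ^ 47 * X 1 ^ 9
      + C (b 0 * 4100096 + b 1 * 74183 + b 2 * 1423 + b 3 * 31 + b 4 * 1) * X 0 ^ 44 * X 1 ^ 12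
      + C (b 0 * 65601536 + b 1 * 1108712 + b 2 * 18860 + b 3 * 316 + b 4 * 4) * X 0 ^ 41 * X 1 ^ 15
      + C (b 0 * 787218432 + b 1 * 11333696 + b 2 * 140303 + b 3 * 716 + b 4 * (-62)) * X 0 ^ 38 * X 1 ^ 18
      + C (b 0 * 7197425664 + b 1 * 79664640 + b 2 * 509882 + b 3 * (-5794) + b 4 * 68) * X 0 ^ 35 * X 1 ^ 21
      + C (b 0 * 50381979648 + b 1 * 372793344 + b 2 * 83841 + b 3 * (-16078) + b 4 * 1199) * X 0 ^ 32 * X 1 ^ 24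
      + C (b 0 * 268703891456 + b 1 * 1040252928 + b 2 * (-5052864) + b 3 * 87972 + b 4 * (-6952)) * X 0 ^ 29 * X 1 ^ 27
      + C (b 0 * 1074815565824 + b 1 * 1032323072 + b 2 * (-6355200) + b 3 * 27132 + b 4 * 19932) * X 0 ^ 26 * X 1 ^ 30
      + C (b 0 * 3126736191488 + b 1 * (-2722103296) + b 2 * 30027776 + b 3 * (-764823) + b 4 * (-36696)) * X 0 ^ 23 * X 1 ^ 33
      + C (b 0 * 6253472382976 + b 1 * (-7465861120) + b 2 * 15491072 + b 3 * 1955687 + b 4 * 46959) * X 0 ^ 20 * X 1 ^ 36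
      + C (b 0 * 7696581394432 + b 1 * 2281701376 + b 2 * (-126091264) + b 3 * (-2587048) + b 4 * (-42988)) * X 0 ^ 17 * X 1 ^ 39
      + C (b 0 * 4398046511104 + b 1 * 13958643712 + b 2 * 158334976 + b 3 * 2060672 + b 4 * 28226) * X 0 ^ 14 * X 1 ^ 42
      + C (b 1 * (-8589934592) + b 2 * (-83886080) + b 3 * (-1000448) + b 4 * (-13036)) * X 0 ^ 11 * X 1 ^ 45
      + C (b 2 * 16777216 + b 3 * 274432 + b 4 * 4033) * X 0 ^ 8 * X 1 ^ 48
      + C (b 3 * (-32768) + b 4 * (-752)) * X 0 ^ 5 * X 1 ^ 51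
      + C (b 4 * 64) * X 0 ^ 2 * X 1 ^ 54 := by
    rw [hPeq]; unfold fIII; unfold gIII
    simp only [map_add, map_mul, map_one, map_neg, map_ofNat]
    ring
  have e0 : b 0 * 1 = 1 := by
    rw [hExp] at h1
    simp only [coeffXY_add', coeffXY_CXY'] at h1
    norm_num at h1
    linarith
  have e1 : b 0 * 112 + b 1 * 1 = 0 := by
    have h := h0 1 (by norm_num) (by norm_num)
    norm_num at h
    rw [hExp] at h
    simp only [coeffXY_add', coeffXY_CXY'] at h
    norm_num at h
    linarith
  have e2 : b 0 * 5824 + b 1 * 85 + b 2 * 1 = 0 := by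
    have h := h0 2 (by norm_num) (by norm_num)
    norm_num at h
    rw [hExp] at h
    simp only [coeffXY_add', coeffXY_CXY'] at h
    norm_num at h
    linarith
  have e3 : b 0 * 186368 + b 1 * 3259 + b 2 * 58 + b 3 * 1 = 0 := by
    have h := h0 3 (by norm_num) (by norm_num)
    norm_num at h
    rw [hExp] at h
    simp only [coeffXY_add', coeffXY_CXY'] at h
    norm_num at h
    linarith
  have e4 : b 0 * 4100096 + b 1 * 74183 + b 2 * 1423 + b 3 * 31 + b 4 * 1 = 0 := by
    have h := h0 4 (by norm_num) (by norm_num)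
    norm_num at h
    rw [hExp] at h
    simp only [coeffXY_add', coeffXY_CXY'] at h
    norm_num at h
    linarith
  have hv0 : b 0 = 1 := by linarith
  have hv1 : b 1 = (-112) := by linarith
  have hv2 : b 2 = 3696 := by linarith
  have hv3 : b 3 = (-35728) := by linarith
  have hv4 : b 4 = 56560 := by linarith
  intro d
  rw [hExp]
  simp only [coeff_add]
  repeat' apply add_nonneg
  all_goals refine coeff_term_nonneg' ?_ _ _ _
  all_goals simp only [hv0, hv1, hv2, hv3, hv4]; norm_num

lemma case60 (P : MvPolynomial (Fin 2) ℝ) (hP : IsExtremalWE3 60 P) :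
    ∀ d : Fin 2 →₀ ℕ, 0 ≤ P.coeff d := by
  obtain ⟨⟨a, hPeq⟩, h1, h0⟩ := hP
  set b : ℕ → ℝ := fun j => if h : j < 60/12+1 then a ⟨j, h⟩ else 0 with hb
  have key : ∀ i : Fin (60/12+1), a i = b (i : ℕ) := by
    intro i; obtain ⟨iv, hiv⟩ := i; simp only [hb]; rw [dif_pos hiv]
  simp only [key, Fin.sum_univ_succ, Fin.sum_univ_zero, Fin.val_zero, Fin.val_succ] at hPeq
  norm_num at hPeq
  have hExp : P = C (b 0 * 1) * X 0 ^ 60 * X 1 ^ 0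
      + C (b 0 * 120 + b 1 * 1) * X 0 ^ 57 * X 1 ^ 3
      + C (b 0 * 6720 + b 1 * 93 + b 2 * 1) * X 0 ^ 54 * X 1 ^ 6
      + C (b 0 * 232960 + b 1 * 3939 + b 2 * 66 + b 3 * 1) * X 0 ^ 51 * X 1 ^ 9
      + C (b 0 * 5591040 + b 1 * 100255 + b 2 * 1887 + b 3 * 39 + b 4 * 1) * X 0 ^ 48 * X 1 ^ 12
      + C (b 0 * 98402304 + b 1 * 1702176 + b 2 * 30244 + b 3 * 564 + b 4 * 12 + b 5 * 1) * X 0 ^ 45 * X 1 ^ 15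
      + C (b 0 * 1312030720 + b 1 * 20203392 + b 2 * 291183 + b 3 * 3244 + b 4 * (-30) + b 5 * (-15)) * X 0 ^ 42 * X 1 ^ 18
      + C (b 0 * 13495173120 + b 1 * 170334208 + b 2 * 1632306 + b 3 * (-66) + b 4 * (-428) + b 5 * 105) * X 0 ^ 39 * X 1 ^ 21
      + C (b 0 * 107961384960 + b 1 * 1010110464 + b 2 * 4162897 + b 3 * (-62430) + b 4 * 1743 + b 5 * (-455)) * X 0 ^ 36 * X 1 ^ 24
      + C (b 0 * 671759728640 + b 1 * 4022599680 + b 2 * (-4382136) + b 3 * (-40652) + b 4 * 2640 + b 5 * 1365) * X 0 ^ 33 * X 1 ^ 27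
      + C (b 0 * 3224446697472 + b 1 * 9354346496 + b 2 * (-46778112) + b 3 * 730908 + b 4 * (-35684) + b 5 * (-3003)) * X 0 ^ 30 * X 1 ^ 30
      + C (b 0 * 11725260718080 + b 1 * 5536481280 + b 2 * (-20813824) + b 3 * (-547767) + b 4 * 122760 + b 5 * 5005) * X 0 ^ 27 * X 1 ^ 33
      + C (b 0 * 31267361914880 + b 1 * (-29242687488) + b 2 * 255713280 + b 3 * (-4162897) + b 4 * (-246609) + b 5 * (-6435)) * X 0 ^ 24 * X 1 ^ 36
      + C (b 0 * 57724360458240 + b 1 * (-57445187584) + b 2 * (-2162688) + b 3 * 13058448 + b 4 * 332684 + b 5 * 6435) * X 0 ^ 21 * X 1 ^ 39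
      + C (b 0 * 65970697666560 + b 1 * 32212254720 + b 2 * (-850395136) + b 3 * (-18635712) + b 4 * (-315678) + b 5 * (-5005)) * X 0 ^ 18 * X 1 ^ 42
      + C (b 0 * 35184372088832 + b 1 * 103079215104 + b 2 * 1182793728 + b 3 * 15484928 + b 4 * 212772 + b 5 * 3003) * X 0 ^ 15 * X 1 ^ 45
      + C (b 1 * (-68719476736) + b 2 * (-654311424) + b 3 * (-7729152) + b 4 * (-100255) + b 5 * (-1365)) * X 0 ^ 12 * X 1 ^ 48
      + C (b 2 * 134217728 + b 3 * 2162688 + b 4 * 31512 + b 5 * 455) * X 0 ^ 9 * X 1 ^ 51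
      + C (b 3 * (-262144) + b 4 * (-5952) + b 5 * (-105)) * X 0 ^ 6 * X 1 ^ 54
      + C (b 4 * 512 + b 5 * 15) * X 0 ^ 3 * X 1 ^ 57
      + C (b 5 * (-1)) * X 0 ^ 0 * X 1 ^ 60 := by
    rw [hPeq]; unfold fIII; unfold gIII
    simp only [map_add, map_mul, map_one, map_neg, map_ofNat]
    ring
  have e0 : b 0 * 1 = 1 := by
    rw [hExp] at h1
    simp only [coeffXY_add', coeffXY_CXY'] at h1
    norm_num at h1
    linarith
  have e1 : b 0 * 120 + b 1 * 1 = 0 := by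
    have h := h0 1 (by norm_num) (by norm_num)
    norm_num at h
    rw [hExp] at h
    simp only [coeffXY_add', coeffXY_CXY'] at h
    norm_num at h
    linarith
  have e2 : b 0 * 6720 + b 1 * 93 + b 2 * 1 = 0 := by
    have h := h0 2 (by norm_num) (by norm_num)
    norm_num at h
    rw [hExp] at h
    simp only [coeffXY_add', coeffXY_CXY'] at h
    norm_num at h
    linarith
  have e3 : b 0 * 232960 + b 1 * 3939 + b 2 * 66 + b 3 * 1 = 0 := by
    have h := h0 3 (by norm_num) (by norm_num)
    norm_num at h
    rw [hExp] at h
    simp only [coeffXY_add', coeffXY_CXY'] at h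
    norm_num at h
    linarith
  have e4 : b 0 * 5591040 + b 1 * 100255 + b 2 * 1887 + b 3 * 39 + b 4 * 1 = 0 := by
    have h := h0 4 (by norm_num) (by norm_num)
    norm_num at h
    rw [hExp] at h
    simp only [coeffXY_add', coeffXY_CXY'] at h
    norm_num at h
    linarith
  have e5 : b 0 * 98402304 + b 1 * 1702176 + b 2 * 30244 + b 3 * 564 + b 4 * 12 + b 5 * 1 = 0 := by
    have h := h0 5 (by norm_num) (by norm_num)
    norm_num at h
    rw [hExp] at h
    simp only [coeffXY_add', coeffXY_CXY'] at h
    norm_num at h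
    linarith
  have hv0 : b 0 = 1 := by linarith
  have hv1 : b 1 = (-120) := by linarith
  have hv2 : b 2 = 4440 := by linarith
  have hv3 : b 3 = (-53320) := by linarith
  have hv4 : b 4 = 140760 := by linarith
  have hv5 : b 5 = (-41184) := by linarith
  intro d
  rw [hExp]
  simp only [coeff_add]
  repeat' apply add_nonneg
  all_goals refine coeff_term_nonneg' ?_ _ _ _
  all_goals simp only [hv0, hv1, hv2, hv3, hv4, hv5]; norm_num

lemma case64 (P : MvPolynomial (Fin 2) ℝ) (hP : IsExtremalWE3 64 P) :
    ∀ d : Fin 2 →₀ ℕ, 0 ≤ P.coeff d := by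
  obtain ⟨⟨a, hPeq⟩, h1, h0⟩ := hP
  set b : ℕ → ℝ := fun j => if h : j < 64/12+1 then a ⟨j, h⟩ else 0 with hb
  have key : ∀ i : Fin (64/12+1), a i = b (i : ℕ) := by
    intro i; obtain ⟨iv, hiv⟩ := i; simp only [hb]; rw [dif_pos hiv]
  simp only [key, Fin.sum_univ_succ, Fin.sum_univ_zero, Fin.val_zero, Fin.val_succ] at hPeq
  norm_num at hPeq
  have hExp : P = C (b 0 * 1) * X 0 ^ 64 * X 1 ^ 0
      + C (b 0 * 128 + b 1 * 1) * X 0 ^ 61 * X 1 ^ 3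
      + C (b 0 * 7680 + b 1 * 101 + b 2 * 1) * X 0 ^ 58 * X 1 ^ 6
      + C (b 0 * 286720 + b 1 * 4683 + b 2 * 74 + b 3 * 1) * X 0 ^ 55 * X 1 ^ 9
      + C (b 0 * 7454720 + b 1 * 131767 + b 2 * 2415 + b 3 * 47 + b 4 * 1) * X 0 ^ 52 * X 1 ^ 12
      + C (b 0 * 143130624 + b 1 * 2504216 + b 2 * 45340 + b 3 * 876 + b 4 * 20 + b 5 * 1) * X 0 ^ 49 * X 1 ^ 15
      + C (b 0 * 2099249152 + b 1 * 33820800 + b 2 * 533135 + b 3 * 7756 + b 4 * 66 + b 5 * (-7)) * X 0 ^ 46 * X 1 ^ 18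
      + C (b 0 * 23991418880 + b 1 * 331961344 + b 2 * 3961770 + b 3 * 25886 + b 4 * (-668) + b 5 * (-15)) * X 0 ^ 43 * X 1 ^ 21
      + C (b 0 * 215922769920 + b 1 * 2372784128 + b 2 * 17221345 + b 3 * (-62958) + b 4 * (-1681) + b 5 * 385) * X 0 ^ 40 * X 1 ^ 24
      + C (b 0 * 1535450808320 + b 1 * 12103483392 + b 2 * 28921040 + b 3 * (-540092) + b 4 * 16584 + b 5 * (-2275)) * X 0 ^ 37 * X 1 ^ 27
      + C (b 0 * 8598524526592 + b 1 * 41535143936 + b 2 * (-81835200) + b 3 * 405692 + b 4 * (-14564) + b 5 * 7917) * X 0 ^ 34 * X 1 ^ 30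
      + C (b 0 * 37520834297856 + b 1 * 80371253248 + b 2 * (-395038720) + b 3 * 5299497 + b 4 * (-162712) + b 5 * (-19019)) * X 0 ^ 31 * X 1 ^ 33
      + C (b 0 * 125069447659520 + b 1 * 15049162752 + b 2 * 89202688 + b 3 * (-8545033) + b 4 * 735471 + b 5 * 33605) * X 0 ^ 28 * X 1 ^ 36
      + C (b 0 * 307863255777280 + b 1 * (-291386687488) + b 2 * 2043543552 + b 3 * (-20244728) + b 4 * (-1640188) + b 5 * (-45045)) * X 0 ^ 25 * X 1 ^ 39
      + C (b 0 * 527765581332480 + b 1 * (-427349245952) + b 2 * (-867696640) + b 3 * 85831872 + b 4 * 2345794 + b 5 * 46475) * X 0 ^ 22 * X 1 ^ 42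
      + C (b 0 * 562949953421312 + b 1 * 360777252864 + b 2 * (-5620367360) + b 3 * (-133600768) + b 4 * (-2312652) + b 5 * (-37037)) * X 0 ^ 19 * X 1 ^ 45
      + C (b 0 * 281474976710656 + b 1 * 755914244096 + b 2 * 8808038400 + b 3 * 116150272 + b 4 * 1601921 + b 5 * 22659) * X 0 ^ 16 * X 1 ^ 48
      + C (b 1 * (-549755813888) + b 2 * (-5100273664) + b 3 * (-59670528) + b 4 * (-770528) + b 5 * (-10465)) * X 0 ^ 13 * X 1 ^ 51
      + C (b 2 * 1073741824 + b 3 * 17039360 + b 4 * 246144 + b 5 * 3535) * X 0 ^ 10 * X 1 ^ 54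
      + C (b 3 * (-2097152) + b 4 * (-47104) + b 5 * (-825)) * X 0 ^ 7 * X 1 ^ 57
      + C (b 4 * 4096 + b 5 * 119) * X 0 ^ 4 * X 1 ^ 60
      + C (b 5 * (-8)) * X 0 ^ 1 * X 1 ^ 63 := by
    rw [hPeq]; unfold fIII; unfold gIII
    simp only [map_add, map_mul, map_one, map_neg, map_ofNat]
    ring
  have e0 : b 0 * 1 = 1 := by
    rw [hExp] at h1
    simp only [coeffXY_add', coeffXY_CXY'] at h1
    norm_num at h1
    linarith
  have e1 : b 0 * 128 + b 1 * 1 = 0 := by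
    have h := h0 1 (by norm_num) (by norm_num)
    norm_num at h
    rw [hExp] at h
    simp only [coeffXY_add', coeffXY_CXY'] at h
    norm_num at h
    linarith
  have e2 : b 0 * 7680 + b 1 * 101 + b 2 * 1 = 0 := by
    have h := h0 2 (by norm_num) (by norm_num)
    norm_num at h
    rw [hExp] at h
    simp only [coeffXY_add', coeffXY_CXY'] at h
    norm_num at h
    linarith
  have e3 : b 0 * 286720 + b 1 * 4683 + b 2 * 74 + b 3 * 1 = 0 := by
    have h := h0 3 (by norm_num) (by norm_num)
    norm_num at h
    rw [hExp] at h
    simp only [coeffXY_add', coeffXY_CXY'] at h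
    norm_num at h
    linarith
  have e4 : b 0 * 7454720 + b 1 * 131767 + b 2 * 2415 + b 3 * 47 + b 4 * 1 = 0 := by
    have h := h0 4 (by norm_num) (by norm_num)
    norm_num at h
    rw [hExp] at h
    simp only [coeffXY_add', coeffXY_CXY'] at h
    norm_num at h
    linarith
  have e5 : b 0 * 143130624 + b 1 * 2504216 + b 2 * 45340 + b 3 * 876 + b 4 * 20 + b 5 * 1 = 0 := by
    have h := h0 5 (by norm_num) (by norm_num)
    norm_num at h
    rw [hExp] at h
    simp only [coeffXY_add', coeffXY_CXY'] at h
    norm_num at h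
    linarith
  have hv0 : b 0 = 1 := by linarith
  have hv1 : b 1 = (-128) := by linarith
  have hv2 : b 2 = 5248 := by linarith
  have hv3 : b 3 = (-75648) := by linarith
  have hv4 : b 4 = 292992 := by linarith
  have hv5 : b 5 = (-127488) := by linarith
  intro d
  rw [hExp]
  simp only [coeff_add]
  repeat' apply add_nonneg
  all_goals refine coeff_term_nonneg' ?_ _ _ _
  all_goals simp only [hv0, hv1, hv2, hv3, hv4, hv5]; norm_num

lemma case68 (P : MvPolynomial (Fin 2) ℝ) (hP : IsExtremalWE3 68 P) :
    ∀ d : Fin 2 →₀ ℕ, 0 ≤ P.coeff d := by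
  obtain ⟨⟨a, hPeq⟩, h1, h0⟩ := hP
  set b : ℕ → ℝ := fun j => if h : j < 68/12+1 then a ⟨j, h⟩ else 0 with hb
  have key : ∀ i : Fin (68/12+1), a i = b (i : ℕ) := by
    intro i; obtain ⟨iv, hiv⟩ := i; simp only [hb]; rw [dif_pos hiv]
  simp only [key, Fin.sum_univ_succ, Fin.sum_univ_zero, Fin.val_zero, Fin.val_succ] at hPeq
  norm_num at hPeq
  have hExp : P = C (b 0 * 1) * X 0 ^ 68 * X 1 ^ 0
      + C (b 0 * 136 + b 1 * 1) * X 0 ^ 65 * X 1 ^ 3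
      + C (b 0 * 8704 + b 1 * 109 + b 2 * 1) * X 0 ^ 62 * X 1 ^ 6
      + C (b 0 * 348160 + b 1 * 5491 + b 2 * 82 + b 3 * 1) * X 0 ^ 59 * X 1 ^ 9
      + C (b 0 * 9748480 + b 1 * 169231 + b 2 * 3007 + b 3 * 55 + b 4 * 1) * X 0 ^ 56 * X 1 ^ 12
      + C (b 0 * 202768384 + b 1 * 3558352 + b 2 * 64660 + b 3 * 1252 + b 4 * 28 + b 5 * 1) * X 0 ^ 53 * X 1 ^ 15
      + C (b 0 * 3244294144 + b 1 * 53854528 + b 2 * 895855 + b 3 * 14764 + b 4 * 226 + b 5 * 1) * X 0 ^ 50 * X 1 ^ 18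
      + C (b 0 * 40785412096 + b 1 * 602527744 + b 2 * 8226850 + b 3 * 87934 + b 4 * (-140) + b 5 * (-71)) * X 0 ^ 47 * X 1 ^ 21
      + C (b 0 * 407854120960 + b 1 * 5028474880 + b 2 * 48915505 + b 3 * 144130 + b 4 * (-7025) + b 5 * 265) * X 0 ^ 44 * X 1 ^ 24
      + C (b 0 * 3262832967680 + b 1 * 31085756416 + b 2 * 166691800 + b 3 * (-1043756) + b 4 * 3136 + b 5 * 805) * X 0 ^ 41 * X 1 ^ 27
      + C (b 0 * 20882130993152 + b 1 * 138363011072 + b 2 * 149533120 + b 3 * (-3915044) + b 4 * 118108 + b 5 * (-10283)) * X 0 ^ 38 * X 1 ^ 30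
      + C (b 0 * 106309030510592 + b 1 * 412652404736 + b 2 * (-1049720320) + b 3 * 8545033 + b 4 * (-279224) + b 5 * 44317) * X 0 ^ 35 * X 1 ^ 33
      + C (b 0 * 425236122042368 + b 1 * 658019188736 + b 2 * (-3071107072) + b 3 * 33850943 + b 4 * (-566225) + b 5 * (-118547)) * X 0 ^ 32 * X 1 ^ 36
      + C (b 0 * 1308418837053440 + b 1 * (-170993385472) + b 2 * 2757165056 + b 3 * (-88604992) + b 4 * 4243580 + b 5 * 223795) * X 0 ^ 29 * X 1 ^ 39
      + C (b 0 * 2990671627550720 + b 1 * (-2758442745856) + b 2 * 15480651776 + b 3 * (-76125952) + b 4 * (-10775710) + b 5 * (-313885)) * X 0 ^ 26 * X 1 ^ 42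
      + C (b 0 * 4785074604081152 + b 1 * (-3058016714752) + b 2 * (-12561940480) + b 3 * 553054208 + b 4 * 16453700 + b 5 * 334763) * X 0 ^ 23 * X 1 ^ 45
      + C (b 0 * 4785074604081152 + b 1 * 3642132267008 + b 2 * (-36154900480) + b 3 * (-952655872) + b 4 * (-16899295) + b 5 * (-273637)) * X 0 ^ 20 * X 1 ^ 48
      + C (b 0 * 2251799813685248 + b 1 * 5497558138880 + b 2 * 65364033536 + b 3 * 869531648 + b 4 * 12044840 + b 5 * 170807) * X 0 ^ 17 * X 1 ^ 51
      + C (b 1 * (-4398046511104) + b 2 * (-39728447488) + b 3 * (-460324864) + b 4 * (-5918080) + b 5 * (-80185)) * X 0 ^ 14 * X 1 ^ 54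
      + C (b 2 * 8589934592 + b 3 * 134217728 + b 4 * 1922048 + b 5 * 27455) * X 0 ^ 11 * X 1 ^ 57
      + C (b 3 * (-16777216) + b 4 * (-372736) + b 5 * (-6481)) * X 0 ^ 8 * X 1 ^ 60
      + C (b 4 * 32768 + b 5 * 944) * X 0 ^ 5 * X 1 ^ 63
      + C (b 5 * (-64)) * X 0 ^ 2 * X 1 ^ 66 := by
    rw [hPeq]; unfold fIII; unfold gIII
    simp only [map_add, map_mul, map_one, map_neg, map_ofNat]
    ring
  have e0 : b 0 * 1 = 1 := by
    rw [hExp] at h1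
    simp only [coeffXY_add', coeffXY_CXY'] at h1
    norm_num at h1
    linarith
  have e1 : b 0 * 136 + b 1 * 1 = 0 := by
    have h := h0 1 (by norm_num) (by norm_num)
    norm_num at h
    rw [hExp] at h
    simp only [coeffXY_add', coeffXY_CXY'] at h
    norm_num at h
    linarith
  have e2 : b 0 * 8704 + b 1 * 109 + b 2 * 1 = 0 := by
    have h := h0 2 (by norm_num) (by norm_num)
    norm_num at h
    rw [hExp] at h
    simp only [coeffXY_add', coeffXY_CXY'] at h
    norm_num at h
    linarith
  have e3 : b 0 * 348160 + b 1 * 5491 + b 2 * 82 + b 3 * 1 = 0 := by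
    have h := h0 3 (by norm_num) (by norm_num)
    norm_num at h
    rw [hExp] at h
    simp only [coeffXY_add', coeffXY_CXY'] at h
    norm_num at h
    linarith
  have e4 : b 0 * 9748480 + b 1 * 169231 + b 2 * 3007 + b 3 * 55 + b 4 * 1 = 0 := by
    have h := h0 4 (by norm_num) (by norm_num)
    norm_num at h
    rw [hExp] at h
    simp only [coeffXY_add', coeffXY_CXY'] at h
    norm_num at h
    linarith
  have e5 : b 0 * 202768384 + b 1 * 3558352 + b 2 * 64660 + b 3 * 1252 + b 4 * 28 + b 5 * 1 = 0 := by
    have h := h0 5 (by norm_num) (by norm_num)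
    norm_num at h
    rw [hExp] at h
    simp only [coeffXY_add', coeffXY_CXY'] at h
    norm_num at h
    linarith
  have hv0 : b 0 = 1 := by linarith
  have hv1 : b 1 = (-136) := by linarith
  have hv2 : b 2 = 6120 := by linarith
  have hv3 : b 3 = (-103224) := by linarith
  have hv4 : b 4 = 541416 := by linarith
  have hv5 : b 5 = (-474912) := by linarith
  intro d
  rw [hExp]
  simp only [coeff_add]
  repeat' apply add_nonneg
  all_goals refine coeff_term_nonneg' ?_ _ _ _
  all_goals simp only [hv0, hv1, hv2, hv3, hv4, hv5]; norm_num

/-- For every length `n ≤ 68` with `4 ∣ n`, all coefficients of the extremal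
Type III weight enumerator of length `n` are nonnegative. -/
theorem extremalWE3_small_nonneg (n : ℕ) (h4 : 4 ∣ n) (hn : n ≤ 68)
    (P : MvPolynomial (Fin 2) ℝ) (hP : IsExtremalWE3 n P) :
    ∀ d : Fin 2 →₀ ℕ, 0 ≤ P.coeff d := by
  obtain ⟨k, rfl⟩ := h4
  have hk : k ≤ 17 := by omega
  interval_cases k
  all_goals norm_num at hP
  · exact case0 P hP
  · exact case4 P hP
  · exact case8 P hP
  · exact case12 P hP
  · exact case16 P hP
  · exact case20 P hP
  · exact case24 P hP
  · exact case28 P hP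
  · exact case32 P hP
  · exact case36 P hP
  · exact case40 P hP
  · exact case44 P hP
  · exact case48 P hP
  · exact case52 P hP
  · exact case56 P hP
  · exact case60 P hP
  · exact case64 P hP
  · exact case68 P hP
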